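/- arXiv:2605.03516 — 9 statements merged into one kernel-verified Lean document; each statement's English description precedes it below -/
import Mathlib

section
/- If a spherical triangle has two sides equal to a quadrant (π/2) and its third side less than a quadrant, then the two angles opposite the quadrant sides are right angles and the third angle is acute, equal in measure to the opposite side. -/
open Real

/-- Al-Ṭūsī, Book V, Chapter 3, Proposition II: if two sides of a spherical
triangle are quadrants and the third is less than a quadrant, then the two
angles opposite the quadrant sides are right, and the third angle is acute
and equal to the opposite side. -/
theorem tusi_prop_II (a b c A B C : ℝ)
    (ha : 0 < a) (ha' : a < π / 2)
    (hb : b = π / 2) (hc : c = π / 2)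
    (hA : 0 < A) (hA' : A < π) (hB : 0 < B) (hB' : B < π)
    (hC : 0 < C) (hC' : C < π)
    (lawA : Real.cos a = Real.cos b * Real.cos c + Real.sin b * Real.sin c * Real.cos A)
    (lawB : Real.cos b = Real.cos a * Real.cos c + Real.sin a * Real.sin c * Real.cos B)
    (lawC : Real.cos c = Real.cos a * Real.cos b + Real.sin a * Real.sin b * Real.cos C) :
    B = π / 2 ∧ C = π / 2 ∧ A < π / 2 ∧ A = a := by
  subst hb hc
  simp [Real.cos_pi_div_two, Real.sin_pi_div_two] at lawA lawB lawC
  have hsa : Real.sin a ≠ 0 := ne_of_gt (Real.sin_pos_of_pos_of_lt_pi ha (ha'.trans (by linarith [Real.pi_pos])))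
  have hBc : Real.cos B = 0 := by
    rcases lawB with h | h
    · exact absurd h hsa
    · exact h
  have hCc : Real.cos C = 0 := by
    rcases lawC with h | h
    · exact absurd h hsa
    · exact h
  have hAa : A = a :=
    Real.injOn_cos ⟨hA.le, hA'.le⟩ ⟨ha.le, by linarith [Real.pi_pos]⟩ lawA.symm
  have hBe : B = π / 2 :=
    Real.injOn_cos ⟨hB.le, hB'.le⟩ ⟨by positivity, by linarith [Real.pi_pos]⟩
      (by simp [hBc])
  have hCe : C = π / 2 :=
    Real.injOn_cos ⟨hC.le, hC'.le⟩ ⟨by positivity, by linarith [Real.pi_pos]⟩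
      (by simp [hCc])
  exact ⟨hBe, hCe, by linarith, hAa⟩
end

section
/- If a spherical triangle has two sides equal to a quadrant (π/2) and its third side greater than a quadrant, then the two angles opposite the quadrant sides are right angles and the third angle (opposite the longest side) is obtuse, equal in measure to the opposite side. -/
open Real

/-- Al-Ṭūsī, Book V, Chapter 3, Proposition III: if two sides of a spherical
triangle are quadrants and the third is greater than a quadrant, then the two
angles opposite the quadrant sides are right, and the third angle is obtuse
and equal to the opposite side. -/
theorem tusi_prop_III (a b c A B C : ℝ)
    (ha : π / 2 < a) (ha' : a < π)
    (hb : b = π / 2) (hc : c = π / 2)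
    (hA : 0 < A) (hA' : A < π) (hB : 0 < B) (hB' : B < π)
    (hC : 0 < C) (hC' : C < π)
    (lawA : Real.cos a = Real.cos b * Real.cos c + Real.sin b * Real.sin c * Real.cos A)
    (lawB : Real.cos b = Real.cos a * Real.cos c + Real.sin a * Real.sin c * Real.cos B)
    (lawC : Real.cos c = Real.cos a * Real.cos b + Real.sin a * Real.sin b * Real.cos C) :
    B = π / 2 ∧ C = π / 2 ∧ π / 2 < A ∧ A = a := by
  subst hb hc
  simp [Real.cos_pi_div_two, Real.sin_pi_div_two] at lawA lawB lawC
  have hπ := Real.pi_pos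
  have hsa : 0 < Real.sin a := Real.sin_pos_of_pos_of_lt_pi (by linarith) ha'
  have hcosB : Real.cos B = 0 := lawB.resolve_left hsa.ne'
  have hcosC : Real.cos C = 0 := lawC.resolve_left hsa.ne'
  have hBeq : B = π / 2 := by
    refine Real.injOn_cos ⟨hB.le, hB'.le⟩ ⟨by linarith, by linarith⟩ ?_
    rw [hcosB, Real.cos_pi_div_two]
  have hCeq : C = π / 2 := by
    refine Real.injOn_cos ⟨hC.le, hC'.le⟩ ⟨by linarith, by linarith⟩ ?_
    rw [hcosC, Real.cos_pi_div_two]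
  have hAa : A = a := Real.injOn_cos ⟨hA.le, hA'.le⟩ ⟨by linarith, ha'.le⟩ lawA.symm
  exact ⟨hBeq, hCeq, hAa ▸ ha, hAa⟩
end

section
/- If a spherical triangle has one side equal to a quadrant (π/2) and the other two sides each smaller than a quadrant, then the angle opposite the quadrant side is obtuse and the other two angles are acute. -/
open Real

/-- Al-Ṭūsī, Book V, Chapter 3, Proposition IV: if one side of a spherical
triangle is a quadrant and the other two are smaller than a quadrant, then
the angle opposite the quadrant side is obtuse and the other two are acute. -/
theorem tusi_prop_IV (a b c A B C : ℝ)
    (ha : a = π / 2)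
    (hb : 0 < b) (hb' : b < π / 2) (hc : 0 < c) (hc' : c < π / 2)
    (hA : 0 < A) (hA' : A < π) (hB : 0 < B) (hB' : B < π)
    (hC : 0 < C) (hC' : C < π)
    (lawA : Real.cos a = Real.cos b * Real.cos c + Real.sin b * Real.sin c * Real.cos A)
    (lawB : Real.cos b = Real.cos a * Real.cos c + Real.sin a * Real.sin c * Real.cos B)
    (lawC : Real.cos c = Real.cos a * Real.cos b + Real.sin a * Real.sin b * Real.cos C) :
    π / 2 < A ∧ B < π / 2 ∧ C < π / 2 := by
  subst ha
  simp only [Real.cos_pi_div_two, Real.sin_pi_div_two, zero_mul, one_mul, zero_add] at lawA lawB lawC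
  have hcb : 0 < Real.cos b := Real.cos_pos_of_mem_Ioo ⟨by linarith [Real.pi_pos], hb'⟩
  have hcc : 0 < Real.cos c := Real.cos_pos_of_mem_Ioo ⟨by linarith [Real.pi_pos], hc'⟩
  have hsb : 0 < Real.sin b := Real.sin_pos_of_pos_of_lt_pi hb (by linarith [Real.pi_pos])
  have hsc : 0 < Real.sin c := Real.sin_pos_of_pos_of_lt_pi hc (by linarith [Real.pi_pos])
  have hcA : Real.cos A < 0 := by
    have h1 : Real.sin b * Real.sin c * Real.cos A = -(Real.cos b * Real.cos c) := by linarith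
    have h2 : Real.sin b * Real.sin c * Real.cos A < 0 := by rw [h1]; nlinarith
    by_contra h
    push_neg at h
    nlinarith [mul_pos hsb hsc]
  have hcB : 0 < Real.cos B := by
    by_contra h; push_neg at h; nlinarith
  have hcC : 0 < Real.cos C := by
    by_contra h; push_neg at h; nlinarith
  refine ⟨?_, ?_, ?_⟩
  · by_contra h
    push_neg at h
    exact absurd (Real.cos_nonneg_of_mem_Icc ⟨by linarith, h⟩) (not_le.mpr hcA)
  · by_contra h
    push_neg at h
    exact absurd (Real.cos_nonpos_of_pi_div_two_le_of_le h (by linarith)) (not_le.mpr hcB)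
  · by_contra h
    push_neg at h
    exact absurd (Real.cos_nonpos_of_pi_div_two_le_of_le h (by linarith)) (not_le.mpr hcC)
end

section
/- If a spherical triangle has one side equal to a quadrant (π/2) and the other two sides each greater than a quadrant, then all three of its angles are obtuse. -/
open Real

lemma obt (x : ℝ) (hx : 0 < x) (hx' : x < π) (h : Real.cos x < 0) : π / 2 < x := by
  by_contra hle
  push_neg at hle
  have : 0 ≤ Real.cos x := Real.cos_nonneg_of_mem_Icc ⟨by linarith [Real.pi_pos], hle⟩
  linarith

/-- Al-Ṭūsī, Book V, Chapter 3, Proposition V: if one side of a spherical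
triangle is a quadrant and the other two are greater than a quadrant, then
all three angles are obtuse. -/
theorem tusi_prop_V (a b c A B C : ℝ)
    (ha : a = π / 2)
    (hb : π / 2 < b) (hb' : b < π) (hc : π / 2 < c) (hc' : c < π)
    (hab : a < b + c) (hba : b < a + c) (hca : c < a + b)
    (hsum : a + b + c < 2 * π)
    (hA : 0 < A) (hA' : A < π) (hB : 0 < B) (hB' : B < π)
    (hC : 0 < C) (hC' : C < π)
    (lawA : Real.cos a = Real.cos b * Real.cos c + Real.sin b * Real.sin c * Real.cos A)
    (lawB : Real.cos b = Real.cos a * Real.cos c + Real.sin a * Real.sin c * Real.cos B)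
    (lawC : Real.cos c = Real.cos a * Real.cos b + Real.sin a * Real.sin b * Real.cos C) :
    π / 2 < A ∧ π / 2 < B ∧ π / 2 < C := by
  subst ha
  simp only [Real.cos_pi_div_two, Real.sin_pi_div_two, one_mul, zero_mul, zero_add] at lawA lawB lawC
  have hcb : Real.cos b < 0 := Real.cos_neg_of_pi_div_two_lt_of_lt hb (by linarith)
  have hcc : Real.cos c < 0 := Real.cos_neg_of_pi_div_two_lt_of_lt hc (by linarith)
  have hsb : 0 < Real.sin b := Real.sin_pos_of_pos_of_lt_pi (by linarith [Real.pi_pos]) hb'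
  have hsc : 0 < Real.sin c := Real.sin_pos_of_pos_of_lt_pi (by linarith [Real.pi_pos]) hc'
  refine ⟨obt A hA hA' ?_, obt B hB hB' ?_, obt C hC hC' ?_⟩
  · nlinarith [mul_pos_of_neg_of_neg hcb hcc, mul_pos hsb hsc]
  · nlinarith
  · nlinarith
end

section
/- If a spherical triangle has one side equal to a quadrant, one side smaller than a quadrant, and one side greater than a quadrant, then the angle opposite the greatest side is obtuse and the other two angles are acute. -/
open Real

/-- Al-Ṭūsī, Book V, Chapter 3, Proposition VI: if a spherical triangle has
one side equal to a quadrant, one side smaller and one side greater than a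
quadrant, then the angle opposite the greatest side is obtuse and the other
two angles are acute. -/
theorem tusi_prop_VI (a b c A B C : ℝ)
    (ha : a = π / 2)
    (hb : 0 < b) (hb' : b < π / 2) (hc : π / 2 < c) (hc' : c < π)
    (hab : a < b + c) (hba : b < a + c) (hca : c < a + b)
    (hsum : a + b + c < 2 * π)
    (hA : 0 < A) (hA' : A < π) (hB : 0 < B) (hB' : B < π)
    (hC : 0 < C) (hC' : C < π)
    (lawA : Real.cos a = Real.cos b * Real.cos c + Real.sin b * Real.sin c * Real.cos A)
    (lawB : Real.cos b = Real.cos a * Real.cos c + Real.sin a * Real.sin c * Real.cos B)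
    (lawC : Real.cos c = Real.cos a * Real.cos b + Real.sin a * Real.sin b * Real.cos C) :
    π / 2 < C ∧ A < π / 2 ∧ B < π / 2 := by
  subst ha
  simp [Real.cos_pi_div_two, Real.sin_pi_div_two] at lawA lawB lawC
  have hsinb : 0 < Real.sin b := Real.sin_pos_of_pos_of_lt_pi hb (hb'.trans (by linarith [Real.pi_pos]))
  have hsinc : 0 < Real.sin c := Real.sin_pos_of_pos_of_lt_pi (lt_trans (by positivity) hc) hc'
  have hcosb : 0 < Real.cos b := Real.cos_pos_of_mem_Ioo ⟨by linarith [Real.pi_pos], hb'⟩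
  have hcosc : Real.cos c < 0 := by
    have := Real.cos_lt_cos_of_nonneg_of_le_pi (by positivity) (le_of_lt hc') hc
    simpa using this
  refine ⟨?_, ?_, ?_⟩
  · by_contra h
    push_neg at h
    have : 0 ≤ Real.cos C := Real.cos_nonneg_of_mem_Icc ⟨by linarith, h⟩
    nlinarith
  · by_contra h
    push_neg at h
    have : Real.cos A ≤ 0 := Real.cos_nonpos_of_pi_div_two_le_of_le h (by linarith)
    nlinarith [mul_pos hsinb hsinc, mul_pos hcosb (neg_pos.mpr hcosc),
      mul_nonpos_of_nonneg_of_nonpos (le_of_lt (mul_pos hsinb hsinc)) this]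
  · by_contra h
    push_neg at h
    have : Real.cos B ≤ 0 := Real.cos_nonpos_of_pi_div_two_le_of_le h (by linarith)
    nlinarith
end

section
/- If all three sides of a spherical triangle are smaller than a quadrant (π/2), then at least two of its angles are acute. -/
open Real

lemma cos_lt_one_of_pos_of_lt_pi_div_two {x : ℝ} (hx : 0 < x) (hx' : x < π / 2) : cos x < 1 := by
  simpa using cos_lt_cos_of_nonneg_of_le_pi_div_two le_rfl hx'.le hx

/-- With sides shorter than a quadrant, a non-acute angle lies opposite the strictly longest side;
two non-acute angles would thus make two different sides strictly longest. -/
lemma cos_lt_cos_of_cos_angle_nonpos {a b c X : ℝ}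
    (hb : 0 < b) (hb' : b < π / 2) (hc : 0 < c) (hc' : c < π / 2) (hX : cos X ≤ 0)
    (law : cos a = cos b * cos c + sin b * sin c * cos X) :
    cos a < cos b ∧ cos a < cos c := by
  have hsin : 0 ≤ sin b * sin c :=
    mul_nonneg (sin_pos_of_pos_of_lt_pi hb (by linarith)).le
      (sin_pos_of_pos_of_lt_pi hc (by linarith)).le
  have hcosb : 0 < cos b := cos_pos_of_mem_Ioo ⟨by linarith, hb'⟩
  have hcosc : 0 < cos c := cos_pos_of_mem_Ioo ⟨by linarith, hc'⟩
  have hle : cos a ≤ cos b * cos c := by nlinarith [mul_nonpos_of_nonneg_of_nonpos hsin hX]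
  constructor
  · nlinarith [cos_lt_one_of_pos_of_lt_pi_div_two hc hc']
  · nlinarith [cos_lt_one_of_pos_of_lt_pi_div_two hb hb']

theorem tusi_prop_VII_general (a b c A B C : ℝ)
    (ha : 0 < a) (ha' : a < π / 2)
    (hb : 0 < b) (hb' : b < π / 2)
    (hc : 0 < c) (hc' : c < π / 2)
    (hA' : A < π) (hB' : B < π)
    (hC' : C < π)
    (lawA : Real.cos a = Real.cos b * Real.cos c + Real.sin b * Real.sin c * Real.cos A)
    (lawB : Real.cos b = Real.cos a * Real.cos c + Real.sin a * Real.sin c * Real.cos B)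
    (lawC : Real.cos c = Real.cos a * Real.cos b + Real.sin a * Real.sin b * Real.cos C) :
    (A < π / 2 ∧ B < π / 2) ∨ (A < π / 2 ∧ C < π / 2) ∨ (B < π / 2 ∧ C < π / 2) := by
  have cos_nonpos {X : ℝ} (h : π / 2 ≤ X) (h' : X < π) : cos X ≤ 0 :=
    cos_nonpos_of_pi_div_two_le_of_le h (by linarith)
  by_contra h
  push Not at h
  obtain ⟨hAB, hAC, hBC⟩ := h
  rcases lt_or_ge A (π / 2) with hA2 | hA2
  · have hb_lt := cos_lt_cos_of_cos_angle_nonpos ha ha' hc hc' (cos_nonpos (hAB hA2) hB') lawB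
    have hc_lt := cos_lt_cos_of_cos_angle_nonpos ha ha' hb hb' (cos_nonpos (hAC hA2) hC') lawC
    linarith [hb_lt.2, hc_lt.2]
  · have ha_lt := cos_lt_cos_of_cos_angle_nonpos hb hb' hc hc' (cos_nonpos hA2 hA') lawA
    rcases lt_or_ge B (π / 2) with hB2 | hB2
    · have hc_lt := cos_lt_cos_of_cos_angle_nonpos ha ha' hb hb' (cos_nonpos (hBC hB2) hC') lawC
      linarith [ha_lt.2, hc_lt.1]
    · have hb_lt := cos_lt_cos_of_cos_angle_nonpos ha ha' hc hc' (cos_nonpos hB2 hB') lawB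
      linarith [ha_lt.1, hb_lt.1]

/-- Al-Ṭūsī, Book V, Chapter 3, Proposition VII: if all three sides of a
spherical triangle are smaller than a quadrant, then at least two of its
angles are acute. -/
theorem tusi_prop_VII (a b c A B C : ℝ)
    (ha : 0 < a) (ha' : a < π / 2)
    (hb : 0 < b) (hb' : b < π / 2)
    (hc : 0 < c) (hc' : c < π / 2)
    (hab : a < b + c) (hba : b < a + c) (hca : c < a + b)
    (hA : 0 < A) (hA' : A < π) (hB : 0 < B) (hB' : B < π)
    (hC : 0 < C) (hC' : C < π)
    (lawA : Real.cos a = Real.cos b * Real.cos c + Real.sin b * Real.sin c * Real.cos A)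
    (lawB : Real.cos b = Real.cos a * Real.cos c + Real.sin a * Real.sin c * Real.cos B)
    (lawC : Real.cos c = Real.cos a * Real.cos b + Real.sin a * Real.sin b * Real.cos C) :
    (A < π / 2 ∧ B < π / 2) ∨ (A < π / 2 ∧ C < π / 2) ∨ (B < π / 2 ∧ C < π / 2) :=
  tusi_prop_VII_general a b c A B C ha ha' hb hb' hc hc' hA' hB' hC' lawA lawB lawC
end

section
/- If a spherical triangle has one side greater than a quadrant and its other two sides smaller than a quadrant, then the angle opposite the greatest side is obtuse and the two other angles are acute. -/
open Real

/-- Al-Ṭūsī, Book V, Chapter 3, Proposition IX: if a spherical triangle has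
one side greater than a quadrant and the two others smaller than a quadrant,
then the angle opposite the greatest side is obtuse and the two other angles
are acute. -/
theorem tusi_prop_IX (a b c A B C : ℝ)
    (ha : π / 2 < a) (ha' : a < π)
    (hb : 0 < b) (hb' : b < π / 2)
    (hc : 0 < c) (hc' : c < π / 2)
    (hab : a < b + c) (hba : b < a + c) (hca : c < a + b)
    (hsum : a + b + c < 2 * π)
    (hA : 0 < A) (hA' : A < π) (hB : 0 < B) (hB' : B < π)
    (hC : 0 < C) (hC' : C < π)
    (lawA : Real.cos a = Real.cos b * Real.cos c + Real.sin b * Real.sin c * Real.cos A)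
    (lawB : Real.cos b = Real.cos a * Real.cos c + Real.sin a * Real.sin c * Real.cos B)
    (lawC : Real.cos c = Real.cos a * Real.cos b + Real.sin a * Real.sin b * Real.cos C) :
    π / 2 < A ∧ B < π / 2 ∧ C < π / 2 := by
  have hca' : Real.cos a < 0 := Real.cos_neg_of_pi_div_two_lt_of_lt ha (by linarith [Real.pi_pos])
  have hcb : 0 < Real.cos b := Real.cos_pos_of_mem_Ioo ⟨by linarith, hb'⟩
  have hcc : 0 < Real.cos c := Real.cos_pos_of_mem_Ioo ⟨by linarith, hc'⟩
  have hsa : 0 < Real.sin a := Real.sin_pos_of_pos_of_lt_pi (by linarith [Real.pi_pos]) ha'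
  have hsb : 0 < Real.sin b := Real.sin_pos_of_pos_of_lt_pi hb (by linarith [Real.pi_pos])
  have hsc : 0 < Real.sin c := Real.sin_pos_of_pos_of_lt_pi hc (by linarith [Real.pi_pos])
  refine ⟨?_, ?_, ?_⟩
  · by_contra h
    push_neg at h
    have : 0 ≤ Real.cos A := Real.cos_nonneg_of_mem_Icc ⟨by linarith [Real.pi_pos], h⟩
    nlinarith [mul_pos hcb hcc, mul_pos hsb hsc]
  · by_contra h
    push_neg at h
    have : Real.cos B ≤ 0 := Real.cos_nonpos_of_pi_div_two_le_of_le h (by linarith)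
    nlinarith [mul_pos hsa hsc, mul_pos (neg_pos.2 hca') hcc]
  · by_contra h
    push_neg at h
    have : Real.cos C ≤ 0 := Real.cos_nonpos_of_pi_div_two_le_of_le h (by linarith)
    nlinarith [mul_pos hsa hsb, mul_pos (neg_pos.2 hca') hcb]
end

section
/- If all three sides of a spherical triangle are greater than a quadrant (π/2), then all three of its angles are obtuse. -/
open Real

lemma obtuse_of_cos_neg {x : ℝ} (hx : 0 < x) (hx' : x < π) (h : Real.cos x < 0) :
    π / 2 < x := by
  by_contra hle
  push_neg at hle
  have : 0 ≤ Real.cos x := Real.cos_nonneg_of_mem_Icc ⟨by linarith [Real.pi_pos], hle⟩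
  linarith

/-- Al-Ṭūsī, Book V, Chapter 3, Proposition X: if all three sides of a
spherical triangle are greater than a quadrant, then all three angles are
obtuse. -/
theorem tusi_prop_X (a b c A B C : ℝ)
    (ha : π / 2 < a) (ha' : a < π)
    (hb : π / 2 < b) (hb' : b < π)
    (hc : π / 2 < c) (hc' : c < π)
    (hab : a < b + c) (hba : b < a + c) (hca : c < a + b)
    (hsum : a + b + c < 2 * π)
    (hA : 0 < A) (hA' : A < π) (hB : 0 < B) (hB' : B < π)
    (hC : 0 < C) (hC' : C < π)
    (lawA : Real.cos a = Real.cos b * Real.cos c + Real.sin b * Real.sin c * Real.cos A)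
    (lawB : Real.cos b = Real.cos a * Real.cos c + Real.sin a * Real.sin c * Real.cos B)
    (lawC : Real.cos c = Real.cos a * Real.cos b + Real.sin a * Real.sin b * Real.cos C) :
    π / 2 < A ∧ π / 2 < B ∧ π / 2 < C := by
  have ca : Real.cos a < 0 := Real.cos_neg_of_pi_div_two_lt_of_lt ha (by linarith [Real.pi_pos])
  have cb : Real.cos b < 0 := Real.cos_neg_of_pi_div_two_lt_of_lt hb (by linarith [Real.pi_pos])
  have cc : Real.cos c < 0 := Real.cos_neg_of_pi_div_two_lt_of_lt hc (by linarith [Real.pi_pos])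
  have sa : 0 < Real.sin a := Real.sin_pos_of_pos_of_lt_pi (by linarith [Real.pi_pos]) ha'
  have sb : 0 < Real.sin b := Real.sin_pos_of_pos_of_lt_pi (by linarith [Real.pi_pos]) hb'
  have sc : 0 < Real.sin c := Real.sin_pos_of_pos_of_lt_pi (by linarith [Real.pi_pos]) hc'
  refine ⟨obtuse_of_cos_neg hA hA' ?_, obtuse_of_cos_neg hB hB' ?_, obtuse_of_cos_neg hC hC' ?_⟩
  · nlinarith [mul_pos_of_neg_of_neg cb cc, mul_pos sb sc]
  · nlinarith [mul_pos_of_neg_of_neg ca cc, mul_pos sa sc]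
  · nlinarith [mul_pos_of_neg_of_neg ca cb, mul_pos sa sb]
end

section
/- (Polar/supplementary triangle) If a spherical triangle has sides a, b, c and angles A, B, C, then its polar triangle has sides π − A, π − B, π − C and angles π − a, π − b, π − c. -/
open Real
open RealInnerProductSpace

/-- Spherical distance between two points of the unit sphere. -/
noncomputable def sphDist (u v : EuclideanSpace ℝ (Fin 3)) : ℝ :=
  Real.arccos ⟪u, v⟫

/-- The angle of a spherical triangle, determined from its three side lengths
`a` (opposite the angle), `b`, `c` via the spherical law of cosines. -/
noncomputable def angleFromSides (a b c : ℝ) : ℝ :=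
  Real.arccos ((Real.cos a - Real.cos b * Real.cos c) / (Real.sin b * Real.sin c))

/-!
The pole of the great circle through `P` and `R` is `±(P ⨯₃ R) / ‖P ⨯₃ R‖`, the sign being that of
the triple product `⟪P ⨯₃ R, Q⟫`; the poles `Q'` and `R'` get opposite signs because
`⟪P ⨯₃ R, Q⟫ = -⟪P ⨯₃ Q, R⟫`. The Binet–Cauchy identity
`⟪P ⨯₃ R, P ⨯₃ Q⟫ = ⟪Q, R⟫ - ⟪P, Q⟫⟪P, R⟫` and `‖P ⨯₃ R‖ = sin (PR)` then turn the law of cosines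
into `cos (Q'R') = -cos P`. Since `P, Q, R` are in turn the poles for `P', Q', R'`, the same
statement applied to the polar triangle gives its angles.
-/

open Matrix

section CommRing

variable {K : Type*} [CommRing K]

theorem smul_eq_smul_cross_of_dotProduct_eq_zero {u v w : Fin 3 → K} (hv : u ⬝ᵥ v = 0)
    (hw : u ⬝ᵥ w = 0) :
    (v ⨯₃ w ⬝ᵥ v ⨯₃ w) • u = (v ⨯₃ w ⬝ᵥ u) • v ⨯₃ w := by
  have hu : u ⨯₃ (v ⨯₃ w) = 0 := by
    rw [cross_cross_eq_smul_sub_smul', hw, dotProduct_comm v u, hv, zero_smul, zero_smul, sub_zero]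
  have h := cross_cross_eq_smul_sub_smul' (v ⨯₃ w) u (v ⨯₃ w)
  rwa [hu, map_zero, eq_comm, sub_eq_zero, dotProduct_comm u] at h

theorem cross_dotProduct_swap (P Q R : Fin 3 → K) : P ⨯₃ R ⬝ᵥ Q = -(P ⨯₃ Q ⬝ᵥ R) := by
  rw [dotProduct_comm _ Q, dotProduct_comm _ R, triple_product_permutation,
    triple_product_permutation R, ← cross_anticomm, dotProduct_neg]

theorem cross_ne_zero_of_dotProduct [IsDomain K] {P R v : Fin 3 → K} (hP : P ⬝ᵥ P ≠ 0)
    (hvP : v ⬝ᵥ P = 0) (hvR : v ⬝ᵥ R ≠ 0) : P ⨯₃ R ≠ 0 := by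
  intro hPR
  have h := congrArg (v ⬝ᵥ ·) (cross_cross_eq_smul_sub_smul' P P R)
  simp only [hPR, map_zero, dotProduct_zero, dotProduct_sub, dotProduct_smul, smul_eq_mul,
    hvP, mul_zero, zero_sub, zero_eq_neg] at h
  exact mul_ne_zero hP hvR h

end CommRing

theorem dotProduct_eq_of_poles {P Q R u v : Fin 3 → ℝ} (hP : P ≠ 0)
    (hu : u ⬝ᵥ u = 1) (huP : u ⬝ᵥ P = 0) (huR : u ⬝ᵥ R = 0) (huQ : 0 < u ⬝ᵥ Q)
    (hv : v ⬝ᵥ v = 1) (hvP : v ⬝ᵥ P = 0) (hvQ : v ⬝ᵥ Q = 0) (hvR : 0 < v ⬝ᵥ R) :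
    u ⬝ᵥ v = -(P ⨯₃ R ⬝ᵥ P ⨯₃ Q) / (√(P ⨯₃ R ⬝ᵥ P ⨯₃ R) * √(P ⨯₃ Q ⬝ᵥ P ⨯₃ Q)) := by
  have hPP : P ⬝ᵥ P ≠ 0 := dotProduct_self_eq_zero.not.mpr hP
  have hN : P ⨯₃ R ≠ 0 := cross_ne_zero_of_dotProduct hPP hvP hvR.ne'
  have hM : P ⨯₃ Q ≠ 0 := cross_ne_zero_of_dotProduct hPP huP huQ.ne'
  set N := P ⨯₃ R
  set M := P ⨯₃ Q
  have hNu := smul_eq_smul_cross_of_dotProduct_eq_zero huP huR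
  have hMv := smul_eq_smul_cross_of_dotProduct_eq_zero hvP hvQ
  set α := N ⬝ᵥ u
  set β := M ⬝ᵥ v
  have dot {a b : ℝ} {x y : Fin 3 → ℝ} (h : a • x = b • y) (w : Fin 3 → ℝ) :
      a * (x ⬝ᵥ w) = b * (y ⬝ᵥ w) := by
    simpa only [smul_dotProduct, smul_eq_mul] using congrArg (· ⬝ᵥ w) h
  have hα : N ⬝ᵥ N = α ^ 2 := by simpa [hu, sq, dotProduct_comm u] using dot hNu u
  have hβ : M ⬝ᵥ M = β ^ 2 := by simpa [hv, sq, dotProduct_comm v] using dot hMv v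
  have hαQ : N ⬝ᵥ N * (u ⬝ᵥ Q) = α * (N ⬝ᵥ Q) := dot hNu Q
  have hβR : M ⬝ᵥ M * (v ⬝ᵥ R) = β * (M ⬝ᵥ R) := dot hMv R
  have huv : N ⬝ᵥ N * (u ⬝ᵥ v) = α * (N ⬝ᵥ v) := dot hNu v
  have hNv : M ⬝ᵥ M * (N ⬝ᵥ v) = β * (N ⬝ᵥ M) := by
    simpa [dotProduct_comm N] using dot hMv N
  have hn : 0 < N ⬝ᵥ N := (hα ▸ sq_nonneg α).lt_of_ne' (dotProduct_self_eq_zero.not.mpr hN)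
  have hm : 0 < M ⬝ᵥ M := (hβ ▸ sq_nonneg β).lt_of_ne' (dotProduct_self_eq_zero.not.mpr hM)
  have hαβ : α * β < 0 := by
    have hprod : N ⬝ᵥ N * (u ⬝ᵥ Q) * (M ⬝ᵥ M * (v ⬝ᵥ R)) = -(α * β) * (M ⬝ᵥ R) ^ 2 := by
      rw [hαQ, hβR, cross_dotProduct_swap]; ring
    nlinarith [hprod ▸ mul_pos (mul_pos hn huQ) (mul_pos hm hvR), sq_nonneg (M ⬝ᵥ R)]
  have h : α * β * (α * β * (u ⬝ᵥ v)) = α * β * (N ⬝ᵥ M) := by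
    linear_combination β ^ 2 * huv - β ^ 2 * (u ⬝ᵥ v) * hα + α * hNv - α * (N ⬝ᵥ v) * hβ
  rw [hα, hβ, sqrt_sq_eq_abs, sqrt_sq_eq_abs, ← abs_mul, abs_of_neg hαβ, neg_div_neg_eq,
    eq_div_iff hαβ.ne, mul_comm]
  exact mul_left_cancel₀ hαβ.ne h

theorem real_inner_eq_dotProduct {n : Type*} [Fintype n] (x y : EuclideanSpace ℝ n) :
    ⟪x, y⟫ = WithLp.ofLp x ⬝ᵥ WithLp.ofLp y := by
  rw [EuclideanSpace.inner_eq_star_dotProduct, star_trivial, dotProduct_comm]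

theorem cos_sphDist {x y : EuclideanSpace ℝ (Fin 3)} (hx : ‖x‖ = 1) (hy : ‖y‖ = 1) :
    cos (sphDist x y) = ⟪x, y⟫ := by
  have h := abs_real_inner_le_norm x y
  rw [hx, hy, one_mul, abs_le] at h
  exact cos_arccos h.1 h.2

theorem sphDist_eq_pi_sub_angleFromSides_of_poles {P Q R u v : EuclideanSpace ℝ (Fin 3)}
    (hP : ‖P‖ = 1) (hQ : ‖Q‖ = 1) (hR : ‖R‖ = 1)
    (hu : ‖u‖ = 1) (huP : ⟪u, P⟫ = 0) (huR : ⟪u, R⟫ = 0) (huQ : 0 < ⟪u, Q⟫)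
    (hv : ‖v‖ = 1) (hvP : ⟪v, P⟫ = 0) (hvQ : ⟪v, Q⟫ = 0) (hvR : 0 < ⟪v, R⟫) :
    sphDist u v = π - angleFromSides (sphDist Q R) (sphDist P Q) (sphDist P R) := by
  have hunit {x : EuclideanSpace ℝ (Fin 3)} (hx : ‖x‖ = 1) :
      WithLp.ofLp x ⬝ᵥ WithLp.ofLp x = 1 := by
    rw [← real_inner_eq_dotProduct, real_inner_self_eq_norm_sq, hx, one_pow]
  have hP0 : WithLp.ofLp P ≠ 0 := fun h => by simpa [h] using hunit hP
  rw [real_inner_eq_dotProduct] at huP huR huQ hvP hvQ hvR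
  have huv := dotProduct_eq_of_poles hP0 (hunit hu) huP huR huQ (hunit hv) hvP hvQ hvR
  rw [cross_dot_cross, cross_dot_cross, cross_dot_cross, hunit hP, hunit hQ, hunit hR] at huv
  rw [dotProduct_comm (WithLp.ofLp R) (WithLp.ofLp Q), dotProduct_comm (WithLp.ofLp R),
    dotProduct_comm (WithLp.ofLp Q) (WithLp.ofLp P)] at huv
  rw [angleFromSides, cos_sphDist hQ hR, cos_sphDist hP hQ, cos_sphDist hP hR]
  simp only [sphDist, sin_arccos, real_inner_eq_dotProduct]
  rw [huv, ← arccos_neg]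
  ring_nf

theorem sphDist_comm (u v : EuclideanSpace ℝ (Fin 3)) : sphDist u v = sphDist v u := by
  rw [sphDist, sphDist, real_inner_comm]

theorem polar_triangle_general
    (P Q R P' Q' R' : EuclideanSpace ℝ (Fin 3))
    (hP : ‖P‖ = 1) (hQ : ‖Q‖ = 1) (hR : ‖R‖ = 1)
    (hP' : ‖P'‖ = 1) (hQ' : ‖Q'‖ = 1) (hR' : ‖R'‖ = 1)
    -- P' is the pole of the great circle through Q and R, on the same side as P
    (hP'Q : ⟪P', Q⟫ = 0) (hP'R : ⟪P', R⟫ = 0) (hP'P : 0 < ⟪P', P⟫)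
    -- Q' is the pole of the great circle through P and R, on the same side as Q
    (hQ'P : ⟪Q', P⟫ = 0) (hQ'R : ⟪Q', R⟫ = 0) (hQ'Q : 0 < ⟪Q', Q⟫)
    -- R' is the pole of the great circle through P and Q, on the same side as R
    (hR'P : ⟪R', P⟫ = 0) (hR'Q : ⟪R', Q⟫ = 0) (hR'R : 0 < ⟪R', R⟫) :
    -- sides of the polar triangle are the supplements of the angles
    sphDist Q' R' = π - angleFromSides (sphDist Q R) (sphDist P Q) (sphDist P R) ∧
    sphDist P' R' = π - angleFromSides (sphDist P R) (sphDist P Q) (sphDist Q R) ∧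
    sphDist P' Q' = π - angleFromSides (sphDist P Q) (sphDist P R) (sphDist Q R) ∧
    -- angles of the polar triangle are the supplements of the sides
    angleFromSides (sphDist Q' R') (sphDist P' Q') (sphDist P' R') = π - sphDist Q R ∧
    angleFromSides (sphDist P' R') (sphDist P' Q') (sphDist Q' R') = π - sphDist P R ∧
    angleFromSides (sphDist P' Q') (sphDist P' R') (sphDist Q' R') = π - sphDist P Q := by
  have hQR := sphDist_eq_pi_sub_angleFromSides_of_poles hP hQ hR hQ' hQ'P hQ'R hQ'Q
    hR' hR'P hR'Q hR'R
  have hPR := sphDist_eq_pi_sub_angleFromSides_of_poles hQ hP hR hP' hP'Q hP'R hP'P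
    hR' hR'Q hR'P hR'R
  have hPQ := sphDist_eq_pi_sub_angleFromSides_of_poles hR hP hQ hP' hP'R hP'Q hP'P
    hQ' hQ'R hQ'P hQ'Q
  rw [sphDist_comm Q P] at hPR
  rw [sphDist_comm R P, sphDist_comm R Q] at hPQ
  rw [real_inner_comm] at hP'Q hP'R hP'P hQ'P hQ'R hQ'Q hR'P hR'Q hR'R
  have hQR' := sphDist_eq_pi_sub_angleFromSides_of_poles hP' hQ' hR' hQ hP'Q hR'Q hQ'Q
    hR hP'R hQ'R hR'R
  have hPR' := sphDist_eq_pi_sub_angleFromSides_of_poles hQ' hP' hR' hP hQ'P hR'P hP'P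
    hR hQ'R hP'R hR'R
  have hPQ' := sphDist_eq_pi_sub_angleFromSides_of_poles hR' hP' hQ' hP hR'P hQ'P hP'P
    hQ hR'Q hP'Q hQ'Q
  rw [sphDist_comm Q' P'] at hPR'
  rw [sphDist_comm R' P', sphDist_comm R' Q'] at hPQ'
  exact ⟨hQR, hPR, hPQ, by linarith, by linarith, by linarith⟩

/-- The polar (supplementary) triangle: if a spherical triangle has sides
`a, b, c` and angles `A, B, C`, its polar triangle has sides
`π − A, π − B, π − C` and angles `π − a, π − b, π − c`. -/
theorem polar_triangle
    (P Q R P' Q' R' : EuclideanSpace ℝ (Fin 3))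
    (hP : ‖P‖ = 1) (hQ : ‖Q‖ = 1) (hR : ‖R‖ = 1)
    (hP' : ‖P'‖ = 1) (hQ' : ‖Q'‖ = 1) (hR' : ‖R'‖ = 1)
    (hindep : LinearIndependent ℝ ![P, Q, R])
    -- P' is the pole of the great circle through Q and R, on the same side as P
    (hP'Q : ⟪P', Q⟫ = 0) (hP'R : ⟪P', R⟫ = 0) (hP'P : 0 < ⟪P', P⟫)
    -- Q' is the pole of the great circle through P and R, on the same side as Q
    (hQ'P : ⟪Q', P⟫ = 0) (hQ'R : ⟪Q', R⟫ = 0) (hQ'Q : 0 < ⟪Q', Q⟫)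
    -- R' is the pole of the great circle through P and Q, on the same side as R
    (hR'P : ⟪R', P⟫ = 0) (hR'Q : ⟪R', Q⟫ = 0) (hR'R : 0 < ⟪R', R⟫) :
    -- sides of the polar triangle are the supplements of the angles
    sphDist Q' R' = π - angleFromSides (sphDist Q R) (sphDist P Q) (sphDist P R) ∧
    sphDist P' R' = π - angleFromSides (sphDist P R) (sphDist P Q) (sphDist Q R) ∧
    sphDist P' Q' = π - angleFromSides (sphDist P Q) (sphDist P R) (sphDist Q R) ∧
    -- angles of the polar triangle are the supplements of the sides
    angleFromSides (sphDist Q' R') (sphDist P' Q') (sphDist P' R') = π - sphDist Q R ∧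
    angleFromSides (sphDist P' R') (sphDist P' Q') (sphDist Q' R') = π - sphDist P R ∧
    angleFromSides (sphDist P' Q') (sphDist P' R') (sphDist Q' R') = π - sphDist P Q :=
  polar_triangle_general P Q R P' Q' R' hP hQ hR hP' hQ' hR' hP'Q hP'R hP'P hQ'P hQ'R hQ'Q hR'P hR'Q
    hR'R
end
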